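/- arXiv:1703.01662 — 2 statements merged into one kernel-verified Lean document; each statement's English description precedes it below -/
import Mathlib

section
/- Let ε > 0 satisfy (1 - 4ε²)² = 2ε and let Δ = (1 + 4ε²)² + 8(1 + 4ε). Then n₁(ε) - √Δ · n₂(ε) < 0, where n₁(χ) = 5 + 14χ - 8χ³ - 16χ⁴ and n₂(χ) = 1 + 2χ + 28χ² + 64χ³. -/
namespace HopfNumerator

def n₁ (χ : ℝ) : ℝ := 5 + 14 * χ - 8 * χ ^ 3 - 16 * χ ^ 4

def n₂ (χ : ℝ) : ℝ := 1 + 2 * χ + 28 * χ ^ 2 + 64 * χ ^ 3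

def discr (χ : ℝ) : ℝ := (1 + 4 * χ ^ 2) ^ 2 + 8 * (1 + 4 * χ)

/-- Both positive roots of `(1 - 4χ²)² = 2χ` exceed `1/4`: on `(0, 1/4]` the left side is at
least `9/16` while the right side is at most `1/2`. -/
theorem quarter_lt_of_bifurcation {χ : ℝ} (h : (1 - 4 * χ ^ 2) ^ 2 = 2 * χ) : 1 / 4 < χ := by
  have hpos : 0 < χ := by
    rcases (sq_nonneg (1 - 4 * χ ^ 2)).lt_or_eq with hlt | heq
    · linarith
    · rw [← heq] at h
      nlinarith
  by_contra! hle
  have hsq : 4 * χ ^ 2 ≤ 1 / 4 := by nlinarith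
  nlinarith

theorem n₂_pos {χ : ℝ} (hχ : 0 ≤ χ) : 0 < n₂ χ := by
  unfold n₂
  positivity

theorem four_lt_sqrt_discr {χ : ℝ} (hχ : 1 / 4 < χ) : 4 < √(discr χ) := by
  rw [Real.lt_sqrt (by norm_num), discr]
  nlinarith

theorem n₁_lt_four_mul_n₂ {χ : ℝ} (hχ : 1 / 4 < χ) : n₁ χ < 4 * n₂ χ := by
  unfold n₁ n₂
  nlinarith

end HopfNumerator

open HopfNumerator in
theorem stmt_5_general (ε : ℝ) (hbif : (1 - 4 * ε ^ 2) ^ 2 = 2 * ε) :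
    (5 + 14 * ε - 8 * ε ^ 3 - 16 * ε ^ 4) -
      Real.sqrt ((1 + 4 * ε ^ 2) ^ 2 + 8 * (1 + 4 * ε)) *
        (1 + 2 * ε + 28 * ε ^ 2 + 64 * ε ^ 3) < 0 := by
  change n₁ ε - √(discr ε) * n₂ ε < 0
  have hε := quarter_lt_of_bifurcation hbif
  have hn₂ := n₂_pos (by linarith : 0 ≤ ε)
  calc n₁ ε - √(discr ε) * n₂ ε
      < n₁ ε - 4 * n₂ ε := by gcongr; exact four_lt_sqrt_discr hε
    _ < 0 := by linarith [n₁_lt_four_mul_n₂ hε]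

/-- At the bifurcation point (`ε > 0` with `(1-4ε²)² = 2ε`), with
`Δ = (1+4ε²)² + 8(1+4ε)`, one has `n₁(ε) - √Δ · n₂(ε) < 0` where
`n₁(χ) = 5 + 14χ - 8χ³ - 16χ⁴` and `n₂(χ) = 1 + 2χ + 28χ² + 64χ³`. -/
theorem stmt_5 (ε : ℝ) (hε : 0 < ε) (hbif : (1 - 4 * ε ^ 2) ^ 2 = 2 * ε) :
    (5 + 14 * ε - 8 * ε ^ 3 - 16 * ε ^ 4) -
      Real.sqrt ((1 + 4 * ε ^ 2) ^ 2 + 8 * (1 + 4 * ε)) *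
        (1 + 2 * ε + 28 * ε ^ 2 + 64 * ε ^ 3) < 0 :=
  stmt_5_general ε hbif
end

section
/- Consider the planar system on [-1,1]² at η = 0 and σ > 0 given by the reduced planar dynamics ẋ₁ = ((1-x₁)(1-x₂)r₊ - (1+x₁)(1+x₂)r₋)/(r₊r₋) with r₊ = 1+x₁, r₋ = 1-x₁ (the η = 0 limit), and ẋ₂ = (σ/2)(1-x₂²)(x₂+3x₁)/(3+x₁x₂); its linearization at the origin has Jacobian at (0,0) equal to [[0, -2],[σ/2, σ/6]], whose trace σ/6 and determinant σ are both positive, so both eigenvalues have positive real part. -/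
/-- The linearization at the origin of the reduced planar dynamics (η = 0 limit)
`ẋ₁ = ((1-x₁)(1-x₂)r₊ - (1+x₁)(1+x₂)r₋)/(r₊r₋)` with `r₊ = 1+x₁`, `r₋ = 1-x₁`, and
`ẋ₂ = (σ/2)(1-x₂²)(x₂+3x₁)/(3+x₁x₂)`, has Jacobian `[[0, -2],[σ/2, σ/6]]`,
whose trace `σ/6` and determinant `σ` are positive, so both eigenvalues
(roots of `λ² - (σ/6)λ + σ`) have positive real part. -/
theorem stmt_11 (σ : ℝ) (hσ : 0 < σ) :
    let f₁ : ℝ → ℝ → ℝ := fun x₁ x₂ =>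
      ((1 - x₁) * (1 - x₂) * (1 + x₁) - (1 + x₁) * (1 + x₂) * (1 - x₁)) /
        ((1 + x₁) * (1 - x₁))
    let f₂ : ℝ → ℝ → ℝ := fun x₁ x₂ =>
      σ / 2 * ((1 - x₂ ^ 2) * (x₂ + 3 * x₁) / (3 + x₁ * x₂))
    deriv (fun x₁ => f₁ x₁ 0) 0 = 0 ∧
    deriv (fun x₂ => f₁ 0 x₂) 0 = -2 ∧
    deriv (fun x₁ => f₂ x₁ 0) 0 = σ / 2 ∧
    deriv (fun x₂ => f₂ 0 x₂) 0 = σ / 6 ∧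
    0 < σ / 6 ∧ 0 < σ ∧
    ∀ z : ℂ, z ^ 2 - (σ / 6 : ℝ) * z + (σ : ℝ) = 0 → 0 < z.re := by
  intro f₁ f₂
  refine ⟨?_, ?_, ?_, ?_, by positivity, hσ, ?_⟩
  · have h : (fun x₁ => f₁ x₁ 0) = fun _ => (0 : ℝ) := by
      funext x; simp only [f₁]
      have : (1 - x) * (1 - 0) * (1 + x) - (1 + x) * (1 + 0) * (1 - x) = 0 := by ring
      rw [this, zero_div]
    rw [h, deriv_const]
  · have h : (fun x₂ => f₁ 0 x₂) = fun x => -2 * x := by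
      funext x; simp only [f₁]; norm_num; ring
    rw [h]
    have := (hasDerivAt_id (0:ℝ)).const_mul (-2 : ℝ)
    simpa using this.deriv
  · have h : (fun x₁ => f₂ x₁ 0) = fun x => σ / 2 * x := by
      funext x; simp only [f₂]; norm_num
    rw [h]
    have := (hasDerivAt_id (0:ℝ)).const_mul (σ / 2)
    simpa using this.deriv
  · have h : (fun x₂ => f₂ 0 x₂) = fun x => σ / 2 * ((1 - x ^ 2) * x / 3) := by
      funext x; simp only [f₂]; norm_num
    rw [h]
    have h1 : HasDerivAt (fun x : ℝ => σ / 2 * ((1 - x ^ 2) * x / 3)) (σ / 6) 0 := by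
      have := ((((hasDerivAt_pow 2 (0:ℝ)).const_sub 1).mul (hasDerivAt_id 0)).div_const
        3).const_mul (σ / 2)
      refine this.congr_deriv ?_
      norm_num; ring
    exact h1.deriv
  · intro z hz
    set a := z.re with ha
    set b := z.im with hb
    have hre : a ^ 2 - b ^ 2 - σ / 6 * a + σ = 0 := by
      have := congrArg Complex.re hz
      simpa [pow_two, Complex.mul_re, Complex.mul_im, ha, hb] using this
    have him : 2 * a * b - σ / 6 * b = 0 := by
      have := congrArg Complex.im hz
      simp [pow_two, Complex.mul_re, Complex.mul_im, ha, hb] at this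
      linarith
    rcases eq_or_ne b 0 with hb0 | hb0
    · rw [hb0] at hre
      nlinarith [sq_nonneg a]
    · have : a = σ / 12 := by
        have h2 : (2 * a - σ / 6) * b = 0 := by ring_nf; ring_nf at him; linarith
        rcases mul_eq_zero.1 h2 with h | h
        · linarith
        · exact absurd h hb0
      rw [this]; positivity
end
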